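/- arXiv:1709.03888 — 4 statements merged into one kernel-verified Lean document; each statement's English description precedes it below -/
import Mathlib

section
/- Let X be a quasi-median graph, J a hyperplane, and C1, C2 two cliques contained in J. Then either C1 = C2 or C1 ∩ C2 = ∅. -/
/-!
Fix a gate map `p` onto `C₁`. The key local fact is that two distinct neighbours of a vertex
cannot share a gate other than its own: the quadrangle condition would then produce an
induced `K₄⁻` or `K_{3,2}`. It implies that "the endpoints have distinct gates" is preserved
by both moves generating hyperplanes (to another edge of a common clique, and to the
opposite side of a square), so it holds for every edge of `J`. For `v ∈ C₁ ∩ C₂` and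
`w ∈ C₂ \ {v}` this says that the gate of `w` is not `v`, which forces `w ∈ C₁`; maximality
of `C₂` then gives `C₁ = C₂`.
-/

variable {V : Type*}

namespace QM

/-- `y` is a gate for `x` in the vertex set `Y`. -/
def IsGate (G : SimpleGraph V) (Y : Set V) (x y : V) : Prop :=
  y ∈ Y ∧ ∀ z ∈ Y, G.dist x z = G.dist x y + G.dist y z

/-- `Y` is gated: every vertex admits a gate in `Y`. -/
def Gated (G : SimpleGraph V) (Y : Set V) : Prop :=
  ∀ x : V, ∃ y : V, IsGate G Y x y

/-- Triangle condition of weak modularity. -/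
def TriangleCondition (G : SimpleGraph V) : Prop :=
  ∀ u v w : V, G.Adj v w → G.dist u v = G.dist u w →
    ∃ x : V, G.Adj v x ∧ G.Adj w x ∧ G.dist u x + 1 = G.dist u v

/-- Quadrangle condition of weak modularity. -/
def QuadrangleCondition (G : SimpleGraph V) : Prop :=
  ∀ u z v w : V, G.Adj z v → G.Adj z w → v ≠ w →
    G.dist u v + 1 = G.dist u z → G.dist u w + 1 = G.dist u z →
      ∃ x : V, G.Adj v x ∧ G.Adj w x ∧ G.dist u x + 2 = G.dist u z

/-- No induced `K₄` minus an edge. -/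
def NoK4Minus (G : SimpleGraph V) : Prop :=
  ¬ ∃ a b c d : V, a ≠ b ∧ G.Adj c d ∧ G.Adj a c ∧ G.Adj a d ∧ G.Adj b c ∧ G.Adj b d ∧
    ¬ G.Adj a b

/-- No induced `K_{3,2}`. -/
def NoK32 (G : SimpleGraph V) : Prop :=
  ¬ ∃ a b c d e : V, a ≠ b ∧ a ≠ c ∧ b ≠ c ∧ d ≠ e ∧
    G.Adj a d ∧ G.Adj a e ∧ G.Adj b d ∧ G.Adj b e ∧ G.Adj c d ∧ G.Adj c e ∧
    ¬ G.Adj a b ∧ ¬ G.Adj a c ∧ ¬ G.Adj b c ∧ ¬ G.Adj d e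

/-- Quasi-median graph: weakly modular, no induced `K₄⁻`, no induced `K_{3,2}`. -/
def QuasiMedian (G : SimpleGraph V) : Prop :=
  TriangleCondition G ∧ QuadrangleCondition G ∧ NoK4Minus G ∧ NoK32 G

/-- A clique: a maximal complete subgraph, given by its (nonempty) vertex set. -/
def IsMaxClique (G : SimpleGraph V) (C : Set V) : Prop :=
  G.IsClique C ∧ ∀ D : Set V, G.IsClique D → C ⊆ D → C = D

/-- All endpoints of the edge `e` lie in `C`. -/
def EdgeOf (C : Set V) (e : Sym2 V) : Prop := ∀ v ∈ e, v ∈ C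

/-- Two edges lie in a common (maximal) clique. -/
def SameClique (G : SimpleGraph V) (e f : Sym2 V) : Prop :=
  ∃ C : Set V, IsMaxClique G C ∧ EdgeOf C e ∧ EdgeOf C f

/-- Two edges are opposite sides of an induced square. -/
def OppSquare (G : SimpleGraph V) (e f : Sym2 V) : Prop :=
  ∃ a b c d : V, e = s(a, b) ∧ f = s(c, d) ∧ G.Adj a b ∧ G.Adj c d ∧
    G.Adj a c ∧ G.Adj b d ∧ ¬ G.Adj a d ∧ ¬ G.Adj b c ∧ a ≠ d ∧ b ≠ c

/-- The equivalence relation on edges generated by "being in a common clique or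
opposite sides of a square"; its classes are the hyperplanes. -/
def HypRel (G : SimpleGraph V) : Sym2 V → Sym2 V → Prop :=
  Relation.EqvGen fun e f =>
    e ∈ G.edgeSet ∧ f ∈ G.edgeSet ∧ (SameClique G e f ∨ OppSquare G e f)

/-- `J` is a hyperplane of `G`: the class of some edge under `HypRel`. -/
def IsHyperplane (G : SimpleGraph V) (J : Set (Sym2 V)) : Prop :=
  ∃ e ∈ G.edgeSet, J = {f | f ∈ G.edgeSet ∧ HypRel G e f}

/-- The clique `C` is contained in the hyperplane `J` (all of its edges belong to `J`;
such a clique carries at least one edge). -/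
def CliqueIn (G : SimpleGraph V) (J : Set (Sym2 V)) (C : Set V) : Prop :=
  IsMaxClique G C ∧ (∃ a b : V, a ∈ C ∧ b ∈ C ∧ a ≠ b) ∧
    ∀ a ∈ C, ∀ b ∈ C, a ≠ b → s(a, b) ∈ J

/-- The hyperplane `J` separates `a` from `b`: every walk from `a` to `b` uses an edge
of `J`. -/
def Separates (G : SimpleGraph V) (J : Set (Sym2 V)) (a b : V) : Prop :=
  ∀ p : G.Walk a b, ∃ e ∈ p.edges, e ∈ J

end QM

namespace QM

variable {G : SimpleGraph V}

theorem not_adj_of_dist_add_two_le {u v w : V} (h : G.dist u v + 2 ≤ G.dist u w) :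
    ¬ G.Adj w v := fun hwv => by
  have := hwv.diff_dist_adj (u := u)
  omega

theorem IsMaxClique.mem_of_adj_of_adj (hK : NoK4Minus G) {C : Set V} (hC : IsMaxClique G C)
    {y z t : V} (hy : y ∈ C) (hz : z ∈ C) (hyz : y ≠ z) (hty : G.Adj t y) (htz : G.Adj t z) :
    t ∈ C := by
  have hclique : G.IsClique (insert t C) := by
    refine SimpleGraph.isClique_insert.mpr ⟨hC.1, fun v hv htv => ?_⟩
    rcases eq_or_ne v y with rfl | hvy
    · exact hty
    rcases eq_or_ne v z with rfl | hvz
    · exact htz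
    by_contra htv'
    exact hK ⟨t, v, y, z, htv, hC.1 hy hz hyz, hty, htz, hC.1 hv hy hvy, hC.1 hv hz hvz, htv'⟩
  exact hC.2 _ hclique (Set.subset_insert t C) ▸ Set.mem_insert t C

/-- A nearest vertex of `C` is a gate: a second vertex of `C` at the same distance would,
by the triangle condition, have a common neighbour with it that is closer still, and that
neighbour lies in `C` by maximality. -/
theorem IsMaxClique.gated (hT : TriangleCondition G) (hK : NoK4Minus G) {C : Set V}
    (hC : IsMaxClique G C) (hne : C.Nonempty) : Gated G C := by
  intro x
  obtain ⟨y, hyC, hmin⟩ := exists_minimalFor_of_wellFoundedLT (· ∈ C) (G.dist x) hne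
  have hle : ∀ z ∈ C, G.dist x y ≤ G.dist x z := fun z hz => (le_total _ _).elim (hmin hz) id
  refine ⟨y, hyC, fun z hz => ?_⟩
  rcases eq_or_ne y z with rfl | hyz
  · simp
  have hadj := hC.1 hyC hz hyz
  rw [SimpleGraph.dist_eq_one_iff_adj.mpr hadj]
  have hyz_le := hle z hz
  have hdiff := hadj.diff_dist_adj (u := x)
  by_cases heq : G.dist x z = G.dist x y
  · obtain ⟨t, hyt, hzt, ht⟩ := hT x y z hadj heq.symm
    have := hle t (hC.mem_of_adj_of_adj hK hyC hz hyz hyt.symm hzt.symm)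
    omega
  · omega

theorem eq_of_adj_of_adj_of_dist_succ (hQ : QuadrangleCondition G) (hK : NoK4Minus G)
    (hK32 : NoK32 G) {u a d b x : V} (had : a ≠ d) (had' : ¬ G.Adj a d) (hab : G.Adj a b)
    (hax : G.Adj a x) (hdb : G.Adj d b) (hdx : G.Adj d x) (hb : G.dist u b + 1 = G.dist u a)
    (hx : G.dist u x + 1 = G.dist u a) (hd : G.dist u d = G.dist u a) : b = x := by
  by_contra hbx
  have hbx' : ¬ G.Adj b x := fun h => hK ⟨a, d, b, x, had, h, hab, hax, hdb, hdx, had'⟩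
  obtain ⟨y, hby, hxy, hy⟩ := hQ u a b x hab hax hbx hb hx
  have hay : a ≠ y := by
    rintro rfl
    omega
  have hdy : d ≠ y := by
    rintro rfl
    omega
  exact hK32 ⟨a, d, y, b, x, had, hay, hdy, hbx, hab, hax, hdb, hdx, hby.symm, hxy.symm, had',
    not_adj_of_dist_add_two_le (u := u) (by omega),
    not_adj_of_dist_add_two_le (u := u) (by omega), hbx'⟩

def IsGateMap (G : SimpleGraph V) (C : Set V) (p : V → V) : Prop :=
  ∀ x, IsGate G C x (p x)

namespace IsGateMap

variable {C : Set V} {p : V → V}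

theorem mem (hp : IsGateMap G C p) (x : V) : p x ∈ C := (hp x).1

theorem dist_eq_succ (hC : G.IsClique C) (hp : IsGateMap G C p) {x z : V} (hz : z ∈ C)
    (hne : p x ≠ z) : G.dist x z = G.dist x (p x) + 1 := by
  rw [(hp x).2 z hz, SimpleGraph.dist_eq_one_iff_adj.mpr (hC (hp.mem x) hz hne)]

theorem apply_of_mem (hC : G.IsClique C) (hp : IsGateMap G C p) {x : V} (hx : x ∈ C) :
    p x = x := by
  by_contra hne
  have := hp.dist_eq_succ hC hx hne
  simp at this

theorem mem_of_adj (hC : G.IsClique C) (hp : IsGateMap G C p) {x z : V} (hz : z ∈ C)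
    (hxz : G.Adj x z) (hne : p x ≠ z) : x ∈ C := by
  have h := hp.dist_eq_succ hC hz hne
  rw [SimpleGraph.dist_eq_one_iff_adj.mpr hxz] at h
  have hreach : G.Reachable x (p x) := hxz.reachable.trans (hC hz (hp.mem x) hne.symm).reachable
  rw [(hreach.dist_eq_zero_iff).mp (by omega)]
  exact hp.mem x

theorem dist_eq_of_adj (hC : G.IsClique C) (hp : IsGateMap G C p) {x y : V}
    (hxy : G.Adj x y) (hne : p x ≠ p y) : G.dist x (p x) = G.dist y (p y) := by
  have hx := hp.dist_eq_succ hC (hp.mem y) hne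
  have hy := hp.dist_eq_succ hC (hp.mem x) hne.symm
  have h₁ := hxy.diff_dist_adj (u := p x)
  have h₂ := hxy.diff_dist_adj (u := p y)
  simp only [SimpleGraph.dist_comm (u := p x), SimpleGraph.dist_comm (u := p y)] at h₁ h₂
  omega

/-- If `a` and `d` are adjacent, the triangle condition towards their common gate yields an
induced `K₄⁻`. Otherwise the quadrangle condition yields a second common neighbour `x` of `a`
and `d`, and `b`, `x` are both one step closer than `a`, `d` to the gate of `b`. -/
theorem eq_of_adj_of_adj (hqm : QuasiMedian G) (hC : G.IsClique C) (hp : IsGateMap G C p)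
    {a b d : V} (hba : G.Adj b a) (hbd : G.Adj b d) (hab : p a ≠ p b) (hda : p d = p a) :
    a = d := by
  obtain ⟨hT, hQ, hK, hK32⟩ := hqm
  by_contra had
  have hdb : p d ≠ p b := hda ▸ hab
  have hfa := hp.dist_eq_of_adj hC hba.symm hab
  have hfd := hp.dist_eq_of_adj hC hbd.symm hdb
  have hqa : G.dist (p a) a = G.dist b (p b) := by rw [SimpleGraph.dist_comm, hfa]
  have hqd : G.dist (p a) d = G.dist b (p b) := by rw [SimpleGraph.dist_comm, ← hda, hfd]
  have hqb : G.dist (p a) b = G.dist b (p b) + 1 := by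
    rw [SimpleGraph.dist_comm, hp.dist_eq_succ hC (hp.mem a) hab.symm]
  by_cases had' : G.Adj a d
  · obtain ⟨t, hat, hdt, ht⟩ := hT (p a) a d had' (hqa.trans hqd.symm)
    refine hK ⟨b, t, a, d, ?_, had', hba, hbd, hat.symm, hdt.symm,
      not_adj_of_dist_add_two_le (u := p a) (by omega)⟩
    rintro rfl
    omega
  obtain ⟨x, hax, hdx, hx⟩ := hQ (p a) b a d hba hbd had (by omega) (by omega)
  have hra : G.dist (p b) a = G.dist b (p b) + 1 := by
    rw [SimpleGraph.dist_comm, hp.dist_eq_succ hC (hp.mem b) hab, hfa]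
  have hrd : G.dist (p b) d = G.dist b (p b) + 1 := by
    rw [SimpleGraph.dist_comm, hp.dist_eq_succ hC (hp.mem b) hdb, hfd]
  have hrb : G.dist (p b) b = G.dist b (p b) := SimpleGraph.dist_comm
  have hrx : G.dist (p b) x = G.dist b (p b) := by
    have hr := hC (hp.mem b) (hp.mem a) hab.symm
    have h₁ := hr.reachable.dist_triangle_left x
    have h₂ := hax.diff_dist_adj (u := p b)
    rw [SimpleGraph.dist_eq_one_iff_adj.mpr hr] at h₁
    omega
  have hbx : b = x := eq_of_adj_of_adj_of_dist_succ hQ hK hK32 had had' hba.symm hax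
    hbd.symm hdx (u := p b) (by omega) (by omega) (by omega)
  subst hbx
  omega

theorem apply_ne_of_adj_of_adj (hqm : QuasiMedian G) (hC : G.IsClique C)
    (hp : IsGateMap G C p) {x y u : V} (hxy : G.Adj x y) (hne : p x ≠ p y) (hux : G.Adj u x)
    (huy : G.Adj u y) : p u ≠ p x := fun hu =>
  hux.ne (hp.eq_of_adj_of_adj hqm hC hxy.symm huy.symm hne hu).symm

/-- The triangle condition gives a common neighbour `t` of `a` and `b` one step closer to the
gate of `c`; then `t` has the same gate as `c`, so `t = c` by `eq_of_adj_of_adj`. -/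
theorem adj_of_apply_ne (hqm : QuasiMedian G) (hC : G.IsClique C) (hp : IsGateMap G C p)
    {a b c : V} (hab : G.Adj a b) (hac : G.Adj a c) (hpab : p a ≠ p b) (hpac : p a ≠ p c)
    (hpbc : p b ≠ p c) : G.Adj b c := by
  have hfb := hp.dist_eq_of_adj hC hab hpab
  have hca : G.dist (p c) a = G.dist a (p a) + 1 := by
    rw [SimpleGraph.dist_comm, hp.dist_eq_succ hC (hp.mem c) hpac]
  have hcb : G.dist (p c) b = G.dist a (p a) + 1 := by
    rw [SimpleGraph.dist_comm, hp.dist_eq_succ hC (hp.mem c) hpbc, hfb]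
  obtain ⟨t, hat, hbt, ht⟩ := hqm.1 (p c) a b hab (hca.trans hcb.symm)
  have hta : p t ≠ p a := hp.apply_ne_of_adj_of_adj hqm hC hab hpab hat.symm hbt.symm
  have hft := hp.dist_eq_of_adj hC hat hta.symm
  have htc : p t = p c := by
    by_contra htc
    have := hp.dist_eq_succ hC (hp.mem c) htc
    rw [SimpleGraph.dist_comm] at this
    omega
  obtain rfl := hp.eq_of_adj_of_adj hqm hC hat hac hta htc.symm
  exact hbt

theorem apply_ne_of_square (hqm : QuasiMedian G) (hC : G.IsClique C) (hp : IsGateMap G C p)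
    {a b c d : V} (hab : G.Adj a b) (hac : G.Adj a c) (hbd : G.Adj b d) (hbc : ¬ G.Adj b c)
    (had : a ≠ d) (hbc' : b ≠ c) (hpab : p a ≠ p b) : p c ≠ p d := by
  intro hpcd
  by_cases hca : p c = p a
  · exact had (hp.eq_of_adj_of_adj hqm hC hab.symm hbd hpab (hpcd ▸ hca))
  by_cases hcb : p c = p b
  · exact hbc' (hp.eq_of_adj_of_adj hqm hC hab hac hpab.symm hcb)
  exact hbc (hp.adj_of_apply_ne hqm hC hab hac hpab (Ne.symm hca) (Ne.symm hcb))

theorem apply_ne_of_isClique (hqm : QuasiMedian G) (hC : G.IsClique C) (hp : IsGateMap G C p)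
    {D : Set V} (hD : G.IsClique D) {x y u : V} (hx : x ∈ D) (hy : y ∈ D) (hu : u ∈ D)
    (hpxy : p x ≠ p y) (hux : u ≠ x) : p u ≠ p x := by
  rcases eq_or_ne u y with rfl | huy
  · exact hpxy.symm
  exact hp.apply_ne_of_adj_of_adj hqm hC (hD hx hy (ne_of_apply_ne p hpxy)) hpxy
    (hD hu hx hux) (hD hu hy huy)

theorem apply_ne_apply_of_isClique (hqm : QuasiMedian G) (hC : G.IsClique C)
    (hp : IsGateMap G C p) {D : Set V} (hD : G.IsClique D) {x y u w : V} (hx : x ∈ D)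
    (hy : y ∈ D) (hu : u ∈ D) (hw : w ∈ D) (huw : u ≠ w) (hpxy : p x ≠ p y) :
    p u ≠ p w := by
  rcases eq_or_ne u x with rfl | hux
  · exact (hp.apply_ne_of_isClique hqm hC hD hu hy hw hpxy huw.symm).symm
  have hpux := hp.apply_ne_of_isClique hqm hC hD hx hy hu hpxy hux
  exact (hp.apply_ne_of_isClique hqm hC hD hu hx hw hpux huw.symm).symm

theorem isDiag_map_iff_of_sameClique (hqm : QuasiMedian G) (hC : G.IsClique C)
    (hp : IsGateMap G C p) {e f : Sym2 V} (he : e ∈ G.edgeSet) (hf : f ∈ G.edgeSet)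
    (h : SameClique G e f) : (e.map p).IsDiag ↔ (f.map p).IsDiag := by
  obtain ⟨D, ⟨hD, -⟩, heD, hfD⟩ := h
  induction e using Sym2.ind with | h x y => ?_
  induction f using Sym2.ind with | h u w => ?_
  simp only [EdgeOf, Sym2.mem_iff, forall_eq_or_imp, forall_eq] at heD hfD
  have hxy : x ≠ y := G.ne_of_adj he
  have huw : u ≠ w := G.ne_of_adj hf
  simp only [Sym2.map_mk, Sym2.mk_isDiag_iff]
  exact not_iff_not.mp
    ⟨hp.apply_ne_apply_of_isClique hqm hC hD heD.1 heD.2 hfD.1 hfD.2 huw,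
      hp.apply_ne_apply_of_isClique hqm hC hD hfD.1 hfD.2 heD.1 heD.2 hxy⟩

theorem isDiag_map_iff_of_oppSquare (hqm : QuasiMedian G) (hC : G.IsClique C)
    (hp : IsGateMap G C p) {e f : Sym2 V} (h : OppSquare G e f) :
    (e.map p).IsDiag ↔ (f.map p).IsDiag := by
  obtain ⟨a, b, c, d, rfl, rfl, hab, hcd, hac, hbd, had, hbc, had', hbc'⟩ := h
  simp only [Sym2.map_mk, Sym2.mk_isDiag_iff]
  exact not_iff_not.mp
    ⟨hp.apply_ne_of_square hqm hC hab hac hbd hbc had' hbc',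
      hp.apply_ne_of_square hqm hC hcd hac.symm hbd.symm (fun h => had h.symm)
        hbc'.symm had'.symm⟩

theorem isDiag_map_iff_of_hypRel (hqm : QuasiMedian G) (hC : G.IsClique C)
    (hp : IsGateMap G C p) {e f : Sym2 V} (h : HypRel G e f) :
    (e.map p).IsDiag ↔ (f.map p).IsDiag := by
  induction h with
  | rel e f h =>
    obtain ⟨he, hf, h | h⟩ := h
    · exact hp.isDiag_map_iff_of_sameClique hqm hC he hf h
    · exact hp.isDiag_map_iff_of_oppSquare hqm hC h
  | refl => rfl
  | symm _ _ _ ih => exact ih.symm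
  | trans _ _ _ _ _ ih₁ ih₂ => exact ih₁.trans ih₂

theorem apply_ne_of_mem_hyperplane (hqm : QuasiMedian G) (hC : G.IsClique C)
    (hp : IsGateMap G C p) {J : Set (Sym2 V)} (hJ : IsHyperplane G J) {a b x y : V}
    (ha : a ∈ C) (hb : b ∈ C) (hab : a ≠ b) (habJ : s(a, b) ∈ J) (hxyJ : s(x, y) ∈ J) :
    p x ≠ p y := by
  obtain ⟨e, -, rfl⟩ := hJ
  have h := hp.isDiag_map_iff_of_hypRel hqm hC (.trans _ _ _ (.symm _ _ habJ.2) hxyJ.2)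
  simpa [hp.apply_of_mem hC ha, hp.apply_of_mem hC hb, hab] using h

end IsGateMap

end QM

open QM in
theorem cliques_in_hyperplane_eq_or_disjoint_general
    (G : SimpleGraph V) (hqm : QuasiMedian G)
    (J : Set (Sym2 V)) (hJ : IsHyperplane G J)
    (C₁ C₂ : Set V) (h₁ : CliqueIn G J C₁) (h₂ : CliqueIn G J C₂) :
    C₁ = C₂ ∨ C₁ ∩ C₂ = ∅ := by
  rcases (C₁ ∩ C₂).eq_empty_or_nonempty with h | ⟨v, hv₁, hv₂⟩
  · exact Or.inr h
  obtain ⟨hmax₁, ⟨a, b, ha, hb, hab⟩, hJ₁⟩ := h₁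
  have hC₁ := hmax₁.1
  obtain ⟨p, hp⟩ : ∃ p, IsGateMap G C₁ p :=
    Classical.axiomOfChoice (hmax₁.gated hqm.1 hqm.2.2.1 ⟨a, ha⟩)
  refine Or.inl (h₂.1.2 C₁ hC₁ fun w hw => ?_).symm
  rcases eq_or_ne w v with rfl | hwv
  · exact hv₁
  have hpvw := hp.apply_ne_of_mem_hyperplane hqm hC₁ hJ ha hb hab (hJ₁ a ha b hb hab)
    (h₂.2.2 v hv₂ w hw hwv.symm)
  rw [hp.apply_of_mem hC₁ hv₁] at hpvw
  exact hp.mem_of_adj hC₁ hv₁ (h₂.1.1 hw hv₂ hwv) hpvw.symm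

open QM in
/-- two cliques contained in the same hyperplane of a quasi-median graph
are either equal or disjoint. -/
theorem cliques_in_hyperplane_eq_or_disjoint
    (G : SimpleGraph V) (hqm : QuasiMedian G) (hconn : G.Connected)
    (J : Set (Sym2 V)) (hJ : IsHyperplane G J)
    (C₁ C₂ : Set V) (h₁ : CliqueIn G J C₁) (h₂ : CliqueIn G J C₂) :
    C₁ = C₂ ∨ C₁ ∩ C₂ = ∅ :=
  cliques_in_hyperplane_eq_or_disjoint_general G hqm J hJ C₁ C₂ h₁ h₂
end

section
/- Let X be a quasi-median graph, C a clique, J its hyperplane, and p : X → C the gate map. For each x ∈ C, the sector p⁻¹(x) is a gated subgraph of X. -/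
variable {V : Type*}

/-!
The sector `S = p⁻¹(x)` satisfies Chepoi's criterion for gatedness in a connected weakly modular
graph: `S` induces a connected subgraph, contains its triangles and is locally convex. Along a
gate-changing edge `a b` the distance to the clique is preserved, so `d(x, b) = d(x, a) + 1` when
`a ∈ S`, `b ∉ S`; combined with the triangle and quadrangle conditions based at `x`, a vertex
outside `S` completing a triangle or an induced square of `S` produces an induced `K₄⁻` or `K₃,₂`.

For the criterion, local convexity lets geodesics to a fixed `y ∈ S` be transported along edges
of `S`, so every vertex of `S` has a neighbour in `S` one step closer to `y`. Taking `y ∈ S` nearest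
to `u`, induction on `d(y, z)` shows `d(u, z) = d(u, y) + d(y, z)` for `z ∈ S`: a defect of two is
excluded by the quadrangle condition, a defect of one by the triangle condition.
-/

namespace SimpleGraph

theorem Connected.exists_adj_dist_add_one_eq {V : Type*} {G : SimpleGraph V}
    (hconn : G.Connected) {u v : V} (hne : v ≠ u) :
    ∃ w, G.Adj v w ∧ G.dist u w + 1 = G.dist u v := by
  obtain ⟨q, hq⟩ := hconn.exists_walk_length_eq_dist v u
  cases q with
  | nil => exact absurd rfl hne
  | cons hadj q' =>
    refine ⟨_, hadj, ?_⟩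
    have hle := dist_le q'.reverse
    have := hadj.diff_dist_adj (u := u)
    rw [Walk.length_reverse] at hle
    rw [Walk.length_cons, dist_comm] at hq
    omega

end SimpleGraph

namespace QM

open SimpleGraph

variable {G : SimpleGraph V}

def TriangleClosed (G : SimpleGraph V) (S : Set V) : Prop :=
  ∀ ⦃a b c : V⦄, a ∈ S → b ∈ S → G.Adj a b → G.Adj c a → G.Adj c b → c ∈ S

def LocallyConvex (G : SimpleGraph V) (S : Set V) : Prop :=
  ∀ ⦃a b c d : V⦄, a ∈ S → b ∈ S → c ∈ S → G.Adj a b → G.Adj b c → G.Adj d a → G.Adj d c →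
    a ≠ c → ¬ G.Adj a c → d ≠ b → ¬ G.Adj d b → d ∈ S

section Convexity

variable {S : Set V}

theorem mem_of_four_cycle (hT : TriangleClosed G S) (hL : LocallyConvex G S) {a b c d : V}
    (ha : a ∈ S) (hb : b ∈ S) (hc : c ∈ S) (hab : G.Adj a b) (hbc : G.Adj b c)
    (hda : G.Adj d a) (hdc : G.Adj d c) (hac : a ≠ c) (hdb : d ≠ b) : d ∈ S := by
  by_cases hndb : G.Adj d b
  · exact hT ha hb hab hda hndb
  by_cases hnac : G.Adj a c
  · exact hT ha hc hnac hda hdc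
  exact hL ha hb hc hab hbc hda hdc hac hnac hdb hndb

/-- `v` is joined to `y` by a geodesic of `G` running inside `S`. -/
inductive DescendsTo (G : SimpleGraph V) (S : Set V) (y : V) : V → Prop
  | refl : y ∈ S → DescendsTo G S y y
  | step {v w : V} : v ∈ S → G.Adj v w → G.dist y w + 1 = G.dist y v → DescendsTo G S y w →
      DescendsTo G S y v

theorem DescendsTo.mem {y v : V} : DescendsTo G S y v → v ∈ S
  | .refl hy => hy
  | .step hv _ _ _ => hv

theorem DescendsTo.of_adj_of_dist_add_one (hquad : QuadrangleCondition G)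
    (hT : TriangleClosed G S) (hL : LocallyConvex G S) {y a b : V} (ha : a ∈ S)
    (hab : G.Adj a b) (hd : G.dist y a + 1 = G.dist y b) (hb : DescendsTo G S y b) :
    DescendsTo G S y a := by
  cases hb with
  | refl => simp at hd
  | @step _ w hbS hbw hw hdw =>
    by_cases hwa : w = a
    · exact hwa ▸ hdw
    obtain ⟨q, haq, hwq, hq⟩ := hquad y b a w hab.symm hbw (Ne.symm hwa) (by omega) (by omega)
    have hqS : q ∈ S := mem_of_four_cycle hT hL ha hbS hdw.mem hab hbw haq.symm hwq.symm
      (Ne.symm hwa) (by rintro rfl; omega)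
    have hdq : DescendsTo G S y q :=
      of_adj_of_dist_add_one hquad hT hL hqS hwq.symm (by omega) hdw
    exact .step ha haq (by omega) hdq
termination_by G.dist y a
decreasing_by omega

theorem DescendsTo.of_adj (htri : TriangleCondition G) (hquad : QuadrangleCondition G)
    (hT : TriangleClosed G S) (hL : LocallyConvex G S) {y a b : V} (ha : a ∈ S)
    (hab : G.Adj a b) (hb : DescendsTo G S y b) : DescendsTo G S y a := by
  have := hab.diff_dist_adj (u := y)
  rcases lt_trichotomy (G.dist y a) (G.dist y b) with hlt | heq | hgt
  · exact hb.of_adj_of_dist_add_one hquad hT hL ha hab (by omega)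
  · obtain ⟨t, hat, hbt, ht⟩ := htri y a b hab heq
    have htS : t ∈ S := hT ha hb.mem hab hat.symm hbt.symm
    exact .step ha hat ht (hb.of_adj_of_dist_add_one hquad hT hL htS hbt.symm (by omega))
  · exact .step ha hab (by omega) hb

theorem DescendsTo.of_reachable (htri : TriangleCondition G) (hquad : QuadrangleCondition G)
    (hT : TriangleClosed G S) (hL : LocallyConvex G S) {y : V} (hy : y ∈ S) {v : S}
    (h : (G.induce S).Reachable v ⟨y, hy⟩) : DescendsTo G S y v := by
  rw [reachable_iff_reflTransGen] at h
  induction h using Relation.ReflTransGen.head_induction_on with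
  | refl => exact .refl hy
  | head hab _ ih => exact ih.of_adj htri hquad hT hL (Subtype.property _) hab

theorem exists_adj_mem_dist_add_one_eq (htri : TriangleCondition G)
    (hquad : QuadrangleCondition G) (hT : TriangleClosed G S) (hL : LocallyConvex G S)
    (hS : (G.induce S).Preconnected) {y z : V} (hy : y ∈ S) (hz : z ∈ S) (hzy : z ≠ y) :
    ∃ w ∈ S, G.Adj z w ∧ G.dist y w + 1 = G.dist y z := by
  have hd : DescendsTo G S y z :=
    DescendsTo.of_reachable htri hquad hT hL hy (hS ⟨z, hz⟩ ⟨y, hy⟩)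
  cases hd with
  | refl => exact absurd rfl hzy
  | step _ hzw hw hdw => exact ⟨_, hdw.mem, hzw, hw⟩

section Nearest

variable {u y : V} {m : ℕ}

theorem dist_add_two_ne_of_nearest (hquad : QuadrangleCondition G) (hT : TriangleClosed G S)
    (hL : LocallyConvex G S)
    (hdesc : ∀ z ∈ S, z ≠ y → ∃ w ∈ S, G.Adj z w ∧ G.dist y w + 1 = G.dist y z)
    (hmin : ∀ z ∈ S, G.dist u y ≤ G.dist u z)
    (ih : ∀ z ∈ S, G.dist y z < m → G.dist u z = G.dist u y + G.dist y z)
    {z : V} (hz : z ∈ S) (hzm : G.dist y z = m) : G.dist u z + 2 ≠ G.dist u y + m := by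
  intro hdef
  have hzy : z ≠ y := by rintro rfl; rw [dist_self] at hzm; omega
  obtain ⟨w, hw, hzw, hwz⟩ := hdesc z hz hzy
  have huw := ih w hw (by omega)
  have hwy : w ≠ y := by
    rintro rfl
    have := hmin z hz
    rw [dist_self] at hwz
    omega
  obtain ⟨w', hw', hww', hw'w⟩ := hdesc w hw hwy
  have huw' := ih w' hw' (by omega)
  obtain ⟨t, hzt, hw't, ht⟩ :=
    hquad u w z w' hzw.symm hww' (by rintro rfl; omega) (by omega) (by omega)
  have htS : t ∈ S := mem_of_four_cycle hT hL hz hw hw' hzw hww' hzt.symm hw't.symm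
    (by rintro rfl; omega) (by rintro rfl; omega)
  have := hzt.diff_dist_adj (u := y)
  have := hw't.diff_dist_adj (u := y)
  have := ih t htS (by omega)
  omega

theorem dist_add_one_ne_of_nearest (htri : TriangleCondition G) (hquad : QuadrangleCondition G)
    (hT : TriangleClosed G S) (hL : LocallyConvex G S)
    (hdesc : ∀ z ∈ S, z ≠ y → ∃ w ∈ S, G.Adj z w ∧ G.dist y w + 1 = G.dist y z)
    (hmin : ∀ z ∈ S, G.dist u y ≤ G.dist u z)
    (ih : ∀ z ∈ S, G.dist y z < m → G.dist u z = G.dist u y + G.dist y z)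
    {z : V} (hz : z ∈ S) (hzm : G.dist y z = m) : G.dist u z + 1 ≠ G.dist u y + m := by
  intro hdef
  have hzy : z ≠ y := by rintro rfl; rw [dist_self] at hzm; omega
  obtain ⟨w, hw, hzw, hwz⟩ := hdesc z hz hzy
  have huw := ih w hw (by omega)
  obtain ⟨t, hzt, hwt, ht⟩ := htri u z w hzw (by omega)
  have htS : t ∈ S := hT hz hw hzw hzt.symm hwt.symm
  have := hzt.diff_dist_adj (u := y)
  have := hwt.diff_dist_adj (u := y)
  rcases (show G.dist y t + 1 = m ∨ G.dist y t = m by omega) with hlt | heq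
  · have := ih t htS (by omega)
    omega
  · exact dist_add_two_ne_of_nearest hquad hT hL hdesc hmin ih htS heq (by omega)

theorem dist_eq_add_of_nearest (hconn : G.Connected) (htri : TriangleCondition G)
    (hquad : QuadrangleCondition G) (hT : TriangleClosed G S) (hL : LocallyConvex G S)
    (hdesc : ∀ z ∈ S, z ≠ y → ∃ w ∈ S, G.Adj z w ∧ G.dist y w + 1 = G.dist y z)
    (hmin : ∀ z ∈ S, G.dist u y ≤ G.dist u z) {z : V} (hz : z ∈ S) :
    G.dist u z = G.dist u y + G.dist y z := by
  suffices h : ∀ m, ∀ z ∈ S, G.dist y z = m → G.dist u z = G.dist u y + m from h _ z hz rfl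
  intro m
  induction m using Nat.strong_induction_on with
  | _ m ih =>
  intro z hz hzm
  have ih' : ∀ z ∈ S, G.dist y z < m → G.dist u z = G.dist u y + G.dist y z :=
    fun z hz h => ih _ h z hz rfl
  by_cases hzy : z = y
  · subst hzy
    rw [dist_self] at hzm
    omega
  obtain ⟨w, hw, hzw, hwz⟩ := hdesc z hz hzy
  have := ih' w hw (by omega)
  have := hzw.diff_dist_adj (u := u)
  have := hconn.dist_triangle (u := u) (v := y) (w := z)
  have := dist_add_one_ne_of_nearest htri hquad hT hL hdesc hmin ih' hz hzm
  have := dist_add_two_ne_of_nearest hquad hT hL hdesc hmin ih' hz hzm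
  omega

end Nearest

theorem gated_of_triangleClosed_of_locallyConvex (hconn : G.Connected)
    (htri : TriangleCondition G) (hquad : QuadrangleCondition G)
    (hS : (G.induce S).Preconnected) (hne : S.Nonempty) (hT : TriangleClosed G S)
    (hL : LocallyConvex G S) : Gated G S := by
  intro u
  obtain ⟨y, hy, hmin⟩ : ∃ y ∈ S, ∀ z ∈ S, G.dist u y ≤ G.dist u z :=
    ⟨_, Function.argminOn_mem _ S hne, fun z hz => Function.argminOn_le _ S hz⟩
  exact ⟨y, hy, fun z hz => dist_eq_add_of_nearest hconn htri hquad hT hL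
    (fun z hz hzy => exists_adj_mem_dist_add_one_eq htri hquad hT hL hS hy hz hzy) hmin hz⟩

end Convexity

section Sector

variable {C : Set V}

theorem IsGate.dist_eq_add_one (hC : G.IsClique C) {v g c : V} (h : IsGate G C v g)
    (hc : c ∈ C) (hne : g ≠ c) : G.dist v c = G.dist v g + 1 := by
  rw [h.2 c hc, dist_eq_one_iff_adj.mpr (hC h.1 hc hne)]

theorem IsGate.eq_of_mem (hC : G.IsClique C) {x g : V} (h : IsGate G C x g) (hx : x ∈ C) :
    g = x := by
  by_contra hne
  have := h.dist_eq_add_one hC hx hne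
  rw [dist_self] at this
  omega

theorem IsGate.dist_eq_of_adj (hC : G.IsClique C) {a b ga gb : V} (ha : IsGate G C a ga)
    (hb : IsGate G C b gb) (hab : G.Adj a b) (hne : ga ≠ gb) : G.dist a ga = G.dist b gb := by
  have h1 := ha.dist_eq_add_one hC hb.1 hne
  have h2 := hb.dist_eq_add_one hC ha.1 hne.symm
  have h3 := hab.diff_dist_adj (u := gb)
  have h4 := hab.diff_dist_adj (u := ga)
  rw [dist_comm (u := gb) (v := a), dist_comm (u := gb) (v := b)] at h3
  rw [dist_comm (u := ga) (v := a), dist_comm (u := ga) (v := b)] at h4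
  omega

variable {p : V → V} {x : V}

theorem dist_eq_add_one_of_adj_of_gate_ne (hC : G.IsClique C) (hp : ∀ v, IsGate G C v (p v))
    (hx : x ∈ C) {a b : V} (ha : p a = x) (hb : p b ≠ x) (hab : G.Adj a b) :
    G.dist x b = G.dist x a + 1 := by
  have h1 := (hp b).dist_eq_add_one hC hx hb
  have h2 := (hp a).dist_eq_of_adj hC (hp b) hab (by rw [ha]; exact Ne.symm hb)
  rw [ha] at h2
  rw [dist_comm (u := x), dist_comm (u := x)]
  omega

theorem gate_eq_of_adj_of_dist_le (hC : G.IsClique C) (hp : ∀ v, IsGate G C v (p v))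
    (hx : x ∈ C) {a b : V} (ha : p a = x) (hab : G.Adj a b) (hle : G.dist x b ≤ G.dist x a) :
    p b = x := by
  by_contra hb
  have := dist_eq_add_one_of_adj_of_gate_ne hC hp hx ha hb hab
  omega

theorem induce_sector_preconnected (hconn : G.Connected) (hC : G.IsClique C)
    (hp : ∀ v, IsGate G C v (p v)) (hx : x ∈ C) :
    (G.induce {v | p v = x}).Preconnected := by
  have hxx : p x = x := (hp x).eq_of_mem hC hx
  suffices h : ∀ n, ∀ v (hv : p v = x), G.dist x v = n →
      (G.induce {v | p v = x}).Reachable ⟨v, hv⟩ ⟨x, hxx⟩ from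
    fun a b => (h _ a a.2 rfl).trans (h _ b b.2 rfl).symm
  intro n
  induction n using Nat.strong_induction_on with
  | _ n ih =>
  intro v hv hn
  by_cases hvx : v = x
  · subst hvx
    rfl
  obtain ⟨w, hvw, hw⟩ := hconn.exists_adj_dist_add_one_eq hvx
  have hw_mem : p w = x := gate_eq_of_adj_of_dist_le hC hp hx hv hvw (by omega)
  have hstep : (G.induce {v | p v = x}).Adj ⟨v, hv⟩ ⟨w, hw_mem⟩ := hvw
  exact hstep.reachable.trans (ih _ (by omega) w hw_mem rfl)

theorem triangleClosed_sector (htri : TriangleCondition G) (hk4 : NoK4Minus G)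
    (hC : G.IsClique C) (hp : ∀ v, IsGate G C v (p v)) (hx : x ∈ C) :
    TriangleClosed G {v | p v = x} := by
  intro a b c ha hb hab hca hcb
  by_contra hc
  have hac := dist_eq_add_one_of_adj_of_gate_ne hC hp hx ha hc hca.symm
  have hbc := dist_eq_add_one_of_adj_of_gate_ne hC hp hx hb hc hcb.symm
  obtain ⟨s, has, hbs, hs⟩ := htri x a b hab (by omega)
  refine hk4 ⟨s, c, a, b, ?_, hab, has.symm, hbs.symm, hca, hcb, ?_⟩
  · rintro rfl
    omega
  · intro hsc
    have := hsc.diff_dist_adj (u := x)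
    omega

/-- The quadrangle condition based at the gate of `d` yields an induced `K₃,₂`. -/
theorem gate_eq_of_square_of_dist_lt (hquad : QuadrangleCondition G) (hk32 : NoK32 G)
    (hC : G.IsClique C) (hp : ∀ v, IsGate G C v (p v)) (hx : x ∈ C) {a b c d : V}
    (ha : p a = x) (hb : p b = x) (hc : p c = x) (hab : G.Adj a b) (hbc : G.Adj b c)
    (hda : G.Adj d a) (hdc : G.Adj d c) (hac : a ≠ c) (hnac : ¬ G.Adj a c) (hdb : d ≠ b)
    (hndb : ¬ G.Adj d b) (hlev : G.dist x b + 1 = G.dist x a) : p d = x := by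
  by_contra hd
  have hxg : x ≠ p d := Ne.symm hd
  have hg : p d ∈ C := (hp d).1
  have had := dist_eq_add_one_of_adj_of_gate_ne hC hp hx ha hd hda.symm
  have hcd := dist_eq_add_one_of_adj_of_gate_ne hC hp hx hc hd hdc.symm
  have hag := (hp a).dist_eq_add_one hC hg (by rw [ha]; exact hxg)
  have hbg := (hp b).dist_eq_add_one hC hg (by rw [hb]; exact hxg)
  have hdg := (hp a).dist_eq_of_adj hC (hp d) hda.symm (by rw [ha]; exact hxg)
  rw [ha] at hag hdg
  rw [hb] at hbg
  have := SimpleGraph.dist_comm (G := G) (u := a) (v := x)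
  have := SimpleGraph.dist_comm (G := G) (u := b) (v := x)
  have := SimpleGraph.dist_comm (G := G) (u := a) (v := p d)
  have := SimpleGraph.dist_comm (G := G) (u := b) (v := p d)
  have := SimpleGraph.dist_comm (G := G) (u := d) (v := p d)
  -- measured from `p d`: `a` lies at `d(x, a) + 1`, while `b` and `d` lie at `d(x, a)`
  obtain ⟨q, hdq, hbq, hq⟩ := hquad (p d) a d b hda.symm hab hdb (by omega) (by omega)
  have hq_ne : p q ≠ x := by
    intro hqx
    have h1 := (hp q).dist_eq_add_one hC hg (by rw [hqx]; exact hxg)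
    have h2 := (hp q).dist_eq_of_adj hC (hp d) hdq.symm (by rw [hqx]; exact hxg)
    have := SimpleGraph.dist_comm (G := G) (u := q) (v := p d)
    rw [hqx] at h1 h2
    omega
  have hbq' := dist_eq_add_one_of_adj_of_gate_ne hC hp hx hb hq_ne hbq
  have hnaq : ¬ G.Adj a q := fun h => by
    have := dist_eq_add_one_of_adj_of_gate_ne hC hp hx ha hq_ne h
    omega
  have hncq : ¬ G.Adj c q := fun h => by
    have := dist_eq_add_one_of_adj_of_gate_ne hC hp hx hc hq_ne h
    omega
  exact hk32 ⟨a, c, q, d, b, hac, fun h => hq_ne (h ▸ ha), fun h => hq_ne (h ▸ hc), hdb,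
    hda.symm, hab, hdc.symm, hbc.symm, hdq.symm, hbq.symm, hnac, hnaq, hncq, hndb⟩

theorem locallyConvex_sector (hquad : QuadrangleCondition G) (hk4 : NoK4Minus G)
    (hk32 : NoK32 G) (hC : G.IsClique C) (hp : ∀ v, IsGate G C v (p v)) (hx : x ∈ C) :
    LocallyConvex G {v | p v = x} := by
  intro a b c d ha hb hc hab hbc hda hdc hac hnac hdb hndb
  by_contra hd
  have had := dist_eq_add_one_of_adj_of_gate_ne hC hp hx ha hd hda.symm
  have hcd := dist_eq_add_one_of_adj_of_gate_ne hC hp hx hc hd hdc.symm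
  obtain ⟨s, has, hcs, hs⟩ := hquad x d a c hda hdc hac (by omega) (by omega)
  have hsd : s ≠ d := by rintro rfl; omega
  have hnsd : ¬ G.Adj s d := fun h => by
    have := h.diff_dist_adj (u := x)
    omega
  by_cases hbs : G.Adj b s
  · exact hk4 ⟨a, c, b, s, hac, hbs, hab, has, hbc.symm, hcs, hnac⟩
  by_cases hsb : s = b
  · subst hsb
    exact hd (gate_eq_of_square_of_dist_lt hquad hk32 hC hp hx ha hb hc hab hbc hda hdc hac hnac
      hdb hndb (by omega))
  exact hk32 ⟨d, s, b, a, c, hsd.symm, hdb, hsb, hac, hda, hdc, has.symm, hcs.symm, hab.symm,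
    hbc, fun h => hnsd h.symm, hndb, fun h => hbs h.symm, hnac⟩

end Sector

end QM

open QM in
theorem sector_gated_general
    (G : SimpleGraph V) (hqm : QuasiMedian G) (hconn : G.Connected)
    (C : Set V) (hC : IsMaxClique G C)
    (p : V → V) (hp : ∀ v : V, IsGate G C v (p v))
    (x : V) (hx : x ∈ C) :
    Gated G {y : V | p y = x} := by
  obtain ⟨htri, hquad, hk4, hk32⟩ := hqm
  exact gated_of_triangleClosed_of_locallyConvex hconn htri hquad
    (induce_sector_preconnected hconn hC.1 hp hx) ⟨x, (hp x).eq_of_mem hC.1 hx⟩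
    (triangleClosed_sector htri hk4 hC.1 hp hx) (locallyConvex_sector hquad hk4 hk32 hC.1 hp hx)

open QM in
/-- for a clique `C` of a quasi-median graph with gate map `p`, its
hyperplane `J`, and `x ∈ C`, the sector `p⁻¹(x)` is a gated subgraph. -/
theorem sector_gated
    (G : SimpleGraph V) (hqm : QuasiMedian G) (hconn : G.Connected)
    (C : Set V) (hC : IsMaxClique G C)
    (p : V → V) (hp : ∀ v : V, IsGate G C v (p v))
    (J : Set (Sym2 V)) (hJ : IsHyperplane G J) (hJC : CliqueIn G J C)
    (x : V) (hx : x ∈ C) :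
    Gated G {y : V | p y = x} :=
  sector_gated_general G hqm hconn C hC p hp x hx
end

section
/- Ping-pong lemma for graph products: Let G be a group acting on a set X, Γ a simplicial graph, and H = {H_v : v ∈ V(Γ)} a collection of subgroups of G whose union generates G, such that elements of H_u and H_v commute whenever u and v are adjacent in Γ. Suppose there exist subsets {X_v : v ∈ V(Γ)} of X and a point x0 ∈ X not in any X_v, satisfying: (1) if u,v are adjacent then g·X_u ⊆ X_u for every nontrivial g ∈ H_v; (2) if u,v are distinct and non-adjacent then g·X_u ⊆ X_v for every nontrivial g ∈ H_v; (3) for every u and every nontrivial g ∈ H_u, g·x0 ∈ X_u. Then the natural surjection from the graph product ΓH onto G is an isomorphism. -/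
/-- The commutation relators defining the graph product of the family of groups `M`
over the simplicial graph `Γ`, inside the free product `Monoid.CoprodI M`. -/
def graphProdRels {ι : Type*} (Γ : SimpleGraph ι) (M : ι → Type*) [∀ i, Group (M i)] :
    Set (Monoid.CoprodI M) :=
  {x | ∃ (i j : ι) (_ : Γ.Adj i j) (g : M i) (h : M j),
    x = Monoid.CoprodI.of g * Monoid.CoprodI.of h *
      (Monoid.CoprodI.of g)⁻¹ * (Monoid.CoprodI.of h)⁻¹}

/-- The graph product `ΓM` of a family of groups over a simplicial graph: the quotient
of the free product by the normal closure of the commutation relators. -/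
abbrev GraphProduct {ι : Type*} (Γ : SimpleGraph ι) (M : ι → Type*) [∀ i, Group (M i)] :=
  Monoid.CoprodI M ⧸ Subgroup.normalClosure (graphProdRels Γ M)

/-!
Represent every element of the graph product by a *reduced* word: no letter can be moved,
by commuting it past letters of adjacent vertices, next to an earlier letter of the same
vertex. For a nonempty reduced word `w` and any vertex `v` whose letter can be moved to the
front of `w`, ping-pong gives `w • x₀ ∈ X_v` (by induction on the length: peel off that
letter `g`; either the rest of the word can start at a vertex not adjacent to `v`, and `g`
throws it into `X_v`, or its first letter commutes with `g` and preserves `X_v`). Since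
`x₀ ∉ X_v`, no nonempty reduced word maps to `1`.
-/

namespace GraphProduct

section Words

variable {ι : Type*} (Γ : SimpleGraph ι) {M : ι → Type*}

def CanStartWith (i : ι) : List ((j : ι) × M j) → Prop
  | [] => False
  | a :: w => a.1 = i ∨ (Γ.Adj i a.1 ∧ CanStartWith i w)

variable [∀ i, Monoid (M i)]

def Reduced : List ((j : ι) × M j) → Prop
  | [] => True
  | a :: w => a.2 ≠ 1 ∧ ¬ CanStartWith Γ a.1 w ∧ Reduced w

variable {Γ} {K : Type*} [Monoid K] (f : ∀ i, M i →* K)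

def wordProd (w : List ((j : ι) × M j)) : K := (w.map fun a => f a.1 a.2).prod

@[simp] theorem wordProd_nil : wordProd f ([] : List ((j : ι) × M j)) = 1 := rfl

@[simp] theorem wordProd_cons (a : (j : ι) × M j) (w : List ((j : ι) × M j)) :
    wordProd f (a :: w) = f a.1 a.2 * wordProd f w := List.prod_cons

theorem map_wordProd {L : Type*} [Monoid L] (ψ : K →* L) (w : List ((j : ι) × M j)) :
    ψ (wordProd f w) = wordProd (fun i => ψ.comp (f i)) w := by
  simp [wordProd, map_list_prod, Function.comp_def]

variable {f}

/-- The last clause (erasing the letter exposes no new vertex adjacent to `v`) is what keeps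
the word reduced in the recursive step. -/
theorem Reduced.exists_cons_of_canStartWith
    (hf : ∀ i j, Γ.Adj i j → ∀ (g : M i) (h : M j), Commute (f i g) (f j h)) {v : ι} :
    ∀ {w : List ((j : ι) × M j)}, Reduced Γ w → CanStartWith Γ v w →
      ∃ (g : M v) (w' : List ((j : ι) × M j)), Reduced Γ (⟨v, g⟩ :: w') ∧
        wordProd f w = f v g * wordProd f w' ∧ w'.length < w.length ∧
        ∀ j, Γ.Adj j v → CanStartWith Γ j w' → CanStartWith Γ j w
  | [], _, hv => hv.elim
  | ⟨i, a⟩ :: t, ⟨ha, hnot, ht⟩, .inl hiv => by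
    subst hiv
    exact ⟨a, t, ⟨ha, hnot, ht⟩, wordProd_cons f _ _, by simp, fun _ hj hs => .inr ⟨hj, hs⟩⟩
  | ⟨i, a⟩ :: t, ⟨ha, hnot, ht⟩, .inr ⟨hvi, hvt⟩ => by
    obtain ⟨g, t', ⟨hg, hgt', ht'⟩, hprod, hlen, hmono⟩ := ht.exists_cons_of_canStartWith hf hvt
    refine ⟨g, ⟨i, a⟩ :: t', ⟨hg, ?_, ha, fun h => hnot (hmono i hvi.symm h), ht'⟩, ?_, ?_, ?_⟩
    · rintro (h | ⟨-, h⟩)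
      exacts [hvi.ne' h, hgt' h]
    · simp only [wordProd_cons, hprod, ← mul_assoc, (hf i v hvi.symm a g).eq]
    · simpa using hlen
    · rintro j hj (h | ⟨hji, h⟩)
      exacts [.inl h, .inr ⟨hji, hmono j hj h⟩]

theorem Reduced.exists_reduced_wordProd_eq_mul
    (hf : ∀ i j, Γ.Adj i j → ∀ (g : M i) (h : M j), Commute (f i g) (f j h))
    {w : List ((j : ι) × M j)} (hw : Reduced Γ w) {i : ι} (g : M i) :
    ∃ w', Reduced Γ w' ∧ wordProd f w' = f i g * wordProd f w := by
  by_cases hg : g = 1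
  · exact ⟨w, hw, by simp [hg]⟩
  by_cases hi : CanStartWith Γ i w
  · obtain ⟨a, w', ⟨ha, hnot, hw'⟩, hprod, -⟩ := hw.exists_cons_of_canStartWith hf hi
    by_cases hga : g * a = 1
    · exact ⟨w', hw', by rw [hprod, ← mul_assoc, ← map_mul, hga, map_one, one_mul]⟩
    · exact ⟨⟨i, g * a⟩ :: w', ⟨hga, hnot, hw'⟩, by simp [hprod, mul_assoc]⟩
  · exact ⟨⟨i, g⟩ :: w, ⟨hg, hi, hw⟩, wordProd_cons f _ _⟩

end Words

section Group

variable {ι : Type*} (Γ : SimpleGraph ι) {M : ι → Type*} [∀ i, Group (M i)]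

def of (i : ι) : M i →* GraphProduct Γ M :=
  (QuotientGroup.mk' _).comp Monoid.CoprodI.of

theorem commute_of_of {i j : ι} (hij : Γ.Adj i j) (g : M i) (h : M j) :
    Commute (of Γ i g) (of Γ j h) := by
  rw [← commutatorElement_eq_one_iff_commute, of, of, MonoidHom.comp_apply,
    MonoidHom.comp_apply, ← map_commutatorElement, QuotientGroup.mk'_apply,
    QuotientGroup.eq_one_iff]
  exact Subgroup.subset_normalClosure ⟨i, j, hij, g, h, rfl⟩

theorem exists_reduced_wordProd_eq (x : GraphProduct Γ M) :
    ∃ w, Reduced Γ w ∧ wordProd (of Γ) w = x := by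
  induction x using QuotientGroup.induction_on with | H x => ?_
  induction x using Monoid.CoprodI.induction_left with
  | one => exact ⟨[], trivial, rfl⟩
  | mul g x ih =>
    obtain ⟨w, hw, hwx⟩ := ih
    obtain ⟨w', hw', hw'x⟩ :=
      hw.exists_reduced_wordProd_eq_mul (fun _ _ hij => commute_of_of Γ hij) g
    exact ⟨w', hw', by rw [hw'x, hwx]; rfl⟩

end Group

theorem wordProd_smul_mem_of_canStartWith {G X ι : Type*} [Group G] [MulAction G X]
    {Γ : SimpleGraph ι} {H : ι → Subgroup G}
    (hcomm : ∀ i j, Γ.Adj i j → ∀ g ∈ H i, ∀ h ∈ H j, g * h = h * g)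
    {Xv : ι → Set X} {x₀ : X}
    (h1 : ∀ i j, Γ.Adj i j → ∀ g ∈ H j, g ≠ 1 → ∀ x ∈ Xv i, g • x ∈ Xv i)
    (h2 : ∀ i j, i ≠ j → ¬ Γ.Adj i j → ∀ g ∈ H j, g ≠ 1 → ∀ x ∈ Xv i, g • x ∈ Xv j)
    (h3 : ∀ i, ∀ g ∈ H i, g ≠ 1 → g • x₀ ∈ Xv i)
    {w : List ((j : ι) × H j)} (hw : Reduced Γ w) {v : ι} (hv : CanStartWith Γ v w) :
    wordProd (fun i => (H i).subtype) w • x₀ ∈ Xv v := by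
  have hf : ∀ i j, Γ.Adj i j → ∀ (g : H i) (h : H j),
      Commute ((H i).subtype g) ((H j).subtype h) :=
    fun i j hij g h => hcomm i j hij g g.2 h h.2
  induction hn : w.length using Nat.strong_induction_on generalizing w v with | _ n ih => ?_
  obtain ⟨g, w', ⟨hg, hnot, hw'⟩, hprod, hlen, -⟩ := hw.exists_cons_of_canStartWith hf hv
  have hg' : (g : G) ≠ 1 := by simpa using hg
  rw [hprod, mul_smul]
  rcases w' with _ | ⟨b, w''⟩
  · simpa using h3 v g g.2 hg'
  by_cases hfar : ∃ j, CanStartWith Γ j (b :: w'') ∧ ¬ Γ.Adj v j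
  · obtain ⟨j, hj, hvj⟩ := hfar
    exact h2 j v (fun h => hnot (h ▸ hj)) (fun h => hvj h.symm) g g.2 hg' _
      (ih _ (hn ▸ hlen) hw' hj rfl)
  -- every vertex exposed by `w'` is adjacent to `v`, so `g` commutes past its first letter
  push Not at hfar
  have hvb : Γ.Adj v b.1 := hfar b.1 (.inl rfl)
  obtain ⟨hb, -, hw''⟩ := hw'
  have hgw'' : Reduced Γ (⟨v, g⟩ :: w'') := ⟨hg, fun h => hnot (.inr ⟨hvb, h⟩), hw''⟩
  have hin := ih _ (by simp only [List.length_cons] at hlen ⊢; omega) hgw'' (.inl rfl) rfl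
  rw [wordProd_cons] at hin ⊢
  rw [← mul_smul, ← mul_assoc, (hf v b.1 hvb g b.2).eq, mul_assoc, mul_smul]
  exact h1 v b.1 hvb b.2 b.2.2 (by simpa using hb) _ hin

end GraphProduct

open GraphProduct

/-- ping-pong lemma for graph products. Under the ping-pong hypotheses,
the natural surjection from the graph product of the subgroups `H v` onto `G`
(i.e. any homomorphism from the graph product restricting to the inclusions on the
vertex groups) is an isomorphism. -/
theorem graph_product_ping_pong {G X ι : Type*} [Group G] [MulAction G X]
    (Γ : SimpleGraph ι) (H : ι → Subgroup G)
    (hgen : Subgroup.closure (⋃ i, (H i : Set G)) = ⊤)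
    (hcomm : ∀ i j, Γ.Adj i j → ∀ g ∈ H i, ∀ h ∈ H j, g * h = h * g)
    (Xv : ι → Set X) (x₀ : X) (hx₀ : ∀ i, x₀ ∉ Xv i)
    (h1 : ∀ i j, Γ.Adj i j → ∀ g ∈ H j, g ≠ 1 → ∀ x ∈ Xv i, g • x ∈ Xv i)
    (h2 : ∀ i j, i ≠ j → ¬ Γ.Adj i j → ∀ g ∈ H j, g ≠ 1 → ∀ x ∈ Xv i, g • x ∈ Xv j)
    (h3 : ∀ i, ∀ g ∈ H i, g ≠ 1 → g • x₀ ∈ Xv i)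
    (φ : GraphProduct Γ (fun i => ↥(H i)) →* G)
    (hφ : ∀ (i : ι) (g : ↥(H i)),
      φ (QuotientGroup.mk (Monoid.CoprodI.of g)) = (g : G)) :
    Function.Bijective φ := by
  have hφof : (fun i => φ.comp (of Γ i)) = fun i => (H i).subtype :=
    funext fun i => MonoidHom.ext (hφ i)
  refine ⟨(injective_iff_map_eq_one φ).2 fun x hx => ?_, ?_⟩
  · obtain ⟨w, hw, rfl⟩ := exists_reduced_wordProd_eq Γ x
    rw [map_wordProd, hφof] at hx
    rcases w with _ | ⟨a, t⟩
    · rfl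
    · have hmem := wordProd_smul_mem_of_canStartWith hcomm h1 h2 h3 hw (.inl rfl)
      rw [hx, one_smul] at hmem
      exact (hx₀ a.1 hmem).elim
  · rw [← MonoidHom.range_eq_top, eq_top_iff, ← hgen, Subgroup.closure_le, Set.iUnion_subset_iff]
    exact fun i g hg => ⟨of Γ i ⟨g, hg⟩, hφ i ⟨g, hg⟩⟩
end

section
/- Under the hypotheses of the graph-product ping-pong lemma (subgroups H_v of G acting on X, subsets X_v, basepoint x0 ∉ ∪X_v, satisfying the three ping-pong conditions), for any nonempty reduced word w = g_1⋯g_n in the graph product (g_i ∈ H_{v_i} \ {1}, reduced in the graph product sense), one has w·x0 ∈ X_u for some vertex u in the support of the head of w; in particular w·x0 ≠ x0. -/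
section

variable {G ι : Type*} [Group G]

/-- Shuffling move on words: swap two consecutive syllables whose vertices are adjacent
in `Γ`. -/
def ShuffleStep (Γ : SimpleGraph ι) (w w' : List (ι × G)) : Prop :=
  ∃ (l r : List (ι × G)) (i j : ι) (g h : G), Γ.Adj i j ∧
    w = l ++ (i, g) :: (j, h) :: r ∧ w' = l ++ (j, h) :: (i, g) :: r

/-- Shortening moves on words: cancellation (delete a trivial syllable) and
amalgamation (merge two consecutive syllables from the same vertex group). -/
def ShortenStep (w w' : List (ι × G)) : Prop :=
  (∃ (l r : List (ι × G)) (i : ι), w = l ++ (i, (1 : G)) :: r ∧ w' = l ++ r) ∨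
  (∃ (l r : List (ι × G)) (i : ι) (g h : G),
    w = l ++ (i, g) :: (i, h) :: r ∧ w' = l ++ (i, g * h) :: r)

/-- An elementary move on words. -/
def WordStep (Γ : SimpleGraph ι) (w w' : List (ι × G)) : Prop :=
  ShuffleStep Γ w w' ∨ ShortenStep w w'

/-- A word is reduced if no sequence of elementary moves shortens it. -/
def ReducedWord (Γ : SimpleGraph ι) (w : List (ι × G)) : Prop :=
  ∀ w' : List (ι × G), Relation.ReflTransGen (WordStep Γ) w w' → w.length ≤ w'.length

/-- The head of a word: the syllables appearing as the first syllable of some word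
obtained from `w` by shuffling (i.e. of some reduced word representing the same
element, when `w` is reduced). -/
def WordHead (Γ : SimpleGraph ι) (w : List (ι × G)) : Set (ι × G) :=
  {s | ∃ w' : List (ι × G), Relation.ReflTransGen (ShuffleStep Γ) w w' ∧
    w'.head? = some s}

end

section
variable {G ι : Type*} [Group G] {Γ : SimpleGraph ι}

private lemma shuffleStep_length {w w' : List (ι × G)} (h : ShuffleStep Γ w w') :
    w.length = w'.length := by
  obtain ⟨l, r, i, j, g, h', -, rfl, rfl⟩ := h
  simp

private lemma shuffles_length {w w' : List (ι × G)}
    (h : Relation.ReflTransGen (ShuffleStep Γ) w w') : w.length = w'.length := by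
  induction h with
  | refl => rfl
  | tail _ hstep ih => exact ih.trans (shuffleStep_length hstep)

private lemma shuffleStep_cons {w w' : List (ι × G)} {a : ι × G}
    (h : ShuffleStep Γ w w') : ShuffleStep Γ (a :: w) (a :: w') := by
  obtain ⟨l, r, i, j, g, h', hadj, rfl, rfl⟩ := h
  exact ⟨a :: l, r, i, j, g, h', hadj, rfl, rfl⟩

private lemma wordStep_cons {w w' : List (ι × G)} {a : ι × G}
    (h : WordStep Γ w w') : WordStep Γ (a :: w) (a :: w') := by
  rcases h with h | h
  · exact Or.inl (shuffleStep_cons h)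
  · rcases h with ⟨l, r, i, rfl, rfl⟩ | ⟨l, r, i, g, hh, rfl, rfl⟩
    · exact Or.inr (Or.inl ⟨a :: l, r, i, rfl, rfl⟩)
    · exact Or.inr (Or.inr ⟨a :: l, r, i, g, hh, rfl, rfl⟩)

private lemma reduced_tail {w : List (ι × G)} {a : ι × G}
    (h : ReducedWord Γ (a :: w)) : ReducedWord Γ w := by
  intro w' hsteps
  have := h (a :: w')
    (Relation.ReflTransGen.lift (List.cons a) (fun _ _ hs => wordStep_cons hs) _ _ hsteps)
  simpa using this

end

/-- under the ping-pong hypotheses, for every nonempty reduced word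
`w = g₁ ⋯ gₙ` (syllables nontrivial elements of the vertex subgroups `H v`), the
element represented by `w` sends the basepoint `x₀` into `X u` for some vertex `u` in
the support of the head of `w`; in particular `w · x₀ ≠ x₀`. -/
theorem ping_pong_reduced_word_moves_basepoint
    {G X ι : Type*} [Group G] [MulAction G X]
    (Γ : SimpleGraph ι) (H : ι → Subgroup G)
    (hgen : Subgroup.closure (⋃ i, (H i : Set G)) = ⊤)
    (hcomm : ∀ i j, Γ.Adj i j → ∀ g ∈ H i, ∀ h ∈ H j, g * h = h * g)
    (Xv : ι → Set X) (x₀ : X) (hx₀ : ∀ i, x₀ ∉ Xv i)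
    (h1 : ∀ i j, Γ.Adj i j → ∀ g ∈ H j, g ≠ 1 → ∀ x ∈ Xv i, g • x ∈ Xv i)
    (h2 : ∀ i j, i ≠ j → ¬ Γ.Adj i j → ∀ g ∈ H j, g ≠ 1 → ∀ x ∈ Xv i, g • x ∈ Xv j)
    (h3 : ∀ i, ∀ g ∈ H i, g ≠ 1 → g • x₀ ∈ Xv i)
    (w : List (ι × G)) (hw : w ≠ [])
    (hsyll : ∀ s ∈ w, s.2 ∈ H s.1 ∧ s.2 ≠ 1)
    (hred : ReducedWord Γ w) :
    (∃ s ∈ WordHead Γ w, ((w.map Prod.snd).prod) • x₀ ∈ Xv s.1) ∧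
      ((w.map Prod.snd).prod) • x₀ ≠ x₀ := by
  clear hgen hcomm
  have key : ∀ w : List (ι × G), w ≠ [] → (∀ s ∈ w, s.2 ∈ H s.1 ∧ s.2 ≠ 1) →
      ReducedWord Γ w → ∃ s ∈ WordHead Γ w, ((w.map Prod.snd).prod) • x₀ ∈ Xv s.1 := by
    intro w
    induction w with
    | nil => simp
    | cons a t ih =>
      intro _ hsyll hred
      obtain ⟨i, g⟩ := a
      have hg : g ∈ H i ∧ g ≠ 1 := hsyll (i, g) (by simp)
      have hprod : ((((i, g) :: t).map Prod.snd).prod) • x₀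
          = g • ((t.map Prod.snd).prod • x₀) := by
        simp [mul_smul]
      rcases eq_or_ne t [] with rfl | ht
      · refine ⟨(i, g), ⟨[(i, g)], Relation.ReflTransGen.refl, rfl⟩, ?_⟩
        simpa using h3 i g hg.1 hg.2
      · have hredt : ReducedWord Γ t := reduced_tail hred
        obtain ⟨⟨j, h⟩, ⟨w', hsh, hhd⟩, hx⟩ :=
          ih ht (fun s hs => hsyll s (List.mem_cons_of_mem _ hs)) hredt
        obtain ⟨r, rfl⟩ : ∃ r, w' = (j, h) :: r := by
          cases w' with
          | nil => simp at hhd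
          | cons b r =>
            simp only [List.head?_cons, Option.some.injEq] at hhd
            exact ⟨r, by rw [hhd]⟩
        have hshc : Relation.ReflTransGen (ShuffleStep Γ) ((i, g) :: t)
            ((i, g) :: (j, h) :: r) :=
          Relation.ReflTransGen.lift (List.cons (i, g))
            (fun _ _ hs => shuffleStep_cons hs) _ _ hsh
        by_cases hij : i = j
        · exfalso
          subst hij
          have hstep : ShortenStep ((i, g) :: (i, h) :: r) ((i, g * h) :: r) :=
            Or.inr ⟨[], r, i, g, h, rfl, rfl⟩
          have hlen : t.length = r.length + 1 := by
            simpa using shuffles_length hsh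
          have := hred ((i, g * h) :: r)
            (Relation.ReflTransGen.tail
              (Relation.ReflTransGen.mono (fun _ _ hs => Or.inl hs) _ _ hshc) (Or.inr hstep))
          simp only [List.length_cons, hlen] at this
          omega
        · by_cases hadj : Γ.Adj i j
          · refine ⟨(j, h), ⟨(j, h) :: (i, g) :: r, ?_, rfl⟩, ?_⟩
            · exact hshc.tail ⟨[], r, i, j, g, h, hadj, rfl, rfl⟩
            · rw [hprod]
              exact h1 j i hadj.symm g hg.1 hg.2 _ hx
          · refine ⟨(i, g), ⟨(i, g) :: t, Relation.ReflTransGen.refl, rfl⟩, ?_⟩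
            rw [hprod]
            exact h2 j i (Ne.symm hij) (fun h' => hadj h'.symm) g hg.1 hg.2 _ hx
  obtain ⟨s, hs, hx⟩ := key w hw hsyll hred
  exact ⟨⟨s, hs, hx⟩, fun he => hx₀ s.1 (he ▸ hx)⟩
end
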